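/- arXiv:1309.3341 — 2 statements merged into one kernel-verified Lean document; each statement's English description precedes it below -/
import Mathlib

section
/- Let G be a group and g₁, …, g_k ∈ G torsion elements of finite orders d₁ < d₂ < … < d_k, all greater than 1. Set p₀ = 1 ∈ ℂ[G] and let pⱼ = p_{gⱼ} be the associated idempotents for 1 ≤ j ≤ k. Let τ₀ : ℂ[G] → ℂ be the functional f ↦ f(1) (coefficient at the identity) and, for 1 ≤ i ≤ k, let τᵢ = τ_{C(gᵢ)} be the conjugacy-class functional of the conjugacy class of gᵢ. Then the (k+1)×(k+1) complex matrix A with entries A_{ij} = τᵢ(pⱼ) (indices 0 ≤ i, j ≤ k) has nonzero determinant. -/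
/-- The idempotent associated to an element `g` of finite order `d`:
`p_g = (1/d) · ∑_{t=0}^{d-1} g^t ∈ ℂ[G]`. -/
noncomputable def pIdem {G : Type*} [Group G] (g : G) (d : ℕ) : MonoidAlgebra ℂ G :=
  (d : ℂ)⁻¹ • ∑ t ∈ Finset.range d, MonoidAlgebra.of ℂ G (g ^ t)

/-- The conjugacy-class functional `τ_C(f) = ∑_{g ∈ C} f(g)` on `ℂ[G]`. -/
noncomputable def tauC {G : Type*} [Group G] (C : Set G) (f : MonoidAlgebra ℂ G) : ℂ :=
  ∑ g ∈ f.coeff.support, C.indicator (fun x => f.coeff x) g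

/-! The matrix is upper triangular with nonzero diagonal. Expanding `pⱼ`, the entry `τᵢ(pⱼ)` is
`dⱼ⁻¹` times the number of `t < dⱼ` with `gⱼ ^ t` conjugate to `gᵢ`; such a power has order `dᵢ`
dividing `dⱼ`, which forces `i ≤ j`. Also `τᵢ(1) = 0` since `gᵢ ≠ 1`, and on the diagonal
`t = 1` contributes. -/

open Finset MonoidAlgebra

section ConjugacyClassFunctional

variable {G : Type*} [Group G]

lemma tauC_eq_linearCombination (C : Set G) (f : MonoidAlgebra ℂ G) :
    tauC C f = Finsupp.linearCombination ℂ (C.indicator 1) f.coeff := by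
  rw [tauC, Finsupp.linearCombination_apply, Finsupp.sum]
  refine sum_congr rfl fun x _ => ?_
  by_cases hx : x ∈ C <;> simp [hx]

lemma tauC_single (C : Set G) (x : G) (a : ℂ) :
    tauC C (single x a) = C.indicator (fun _ => a) x := by
  rw [tauC_eq_linearCombination, coeff_single, Finsupp.linearCombination_single]
  by_cases hx : x ∈ C <;> simp [hx]

lemma tauC_one_eq_zero {C : Set G} (h : (1 : G) ∉ C) : tauC C (1 : MonoidAlgebra ℂ G) = 0 := by
  rw [one_def, tauC_single, Set.indicator_of_notMem h]

lemma tauC_pIdem (C : Set G) [DecidablePred (· ∈ C)] (g : G) (d : ℕ) :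
    tauC C (pIdem g d) = (d : ℂ)⁻¹ * #{t ∈ range d | g ^ t ∈ C} := by
  simp only [tauC_eq_linearCombination, pIdem, coeff_smul, coeff_sum, map_smul, map_sum,
    of_apply, coeff_single, Finsupp.linearCombination_single, smul_eq_mul, one_mul,
    Set.indicator_apply, Pi.one_apply, sum_boole]

lemma tauC_pIdem_eq_zero {C : Set G} {g : G} {d : ℕ} (h : ∀ t, g ^ t ∉ C) :
    tauC C (pIdem g d) = 0 := by
  classical
  simp [tauC_pIdem, filter_false_of_mem fun t _ => h t]

lemma tauC_pIdem_ne_zero {C : Set G} {g : G} {d : ℕ} (hd : 1 < d) (hg : g ∈ C) :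
    tauC C (pIdem g d) ≠ 0 := by
  classical
  have hone : 1 ∈ {t ∈ range d | g ^ t ∈ C} := mem_filter.mpr ⟨mem_range.mpr hd, by simpa⟩
  have hcard : (#{t ∈ range d | g ^ t ∈ C} : ℂ) ≠ 0 := by
    exact_mod_cast (card_pos.mpr ⟨1, hone⟩).ne'
  rw [tauC_pIdem]
  exact mul_ne_zero (inv_ne_zero (Nat.cast_ne_zero.mpr (by omega))) hcard

end ConjugacyClassFunctional

lemma orderOf_dvd_of_isConj_pow {G : Type*} [Group G] {a b : G} {t : ℕ}
    (h : IsConj a (b ^ t)) : orderOf a ∣ orderOf b := by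
  obtain ⟨c, hc⟩ := h
  exact hc.orderOf_eq ▸ orderOf_pow_dvd t

/-- Let `g₁, …, g_k` have finite orders `d₁ < d₂ < … < d_k`, all `> 1`.
With `p₀ = 1`, `pⱼ = p_{gⱼ}`, `τ₀ f = f(1)` and `τᵢ = τ_{C(gᵢ)}`, the
`(k+1) × (k+1)` matrix `A_{ij} = τᵢ(pⱼ)` has nonzero determinant. -/
theorem det_trace_matrix_ne_zero {G : Type*} [Group G] (k : ℕ)
    (g : Fin k → G) (d : Fin k → ℕ)
    (hd : ∀ i, 1 < d i) (hmono : StrictMono d)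
    (horder : ∀ i, orderOf (g i) = d i) :
    (Matrix.of fun i j : Fin (k + 1) =>
        (Fin.cons (fun f : MonoidAlgebra ℂ G => f.coeff 1)
            (fun i => tauC {h : G | IsConj (g i) h}) :
          Fin (k + 1) → MonoidAlgebra ℂ G → ℂ) i
        ((Fin.cons (1 : MonoidAlgebra ℂ G) (fun j => pIdem (g j) (d j)) :
          Fin (k + 1) → MonoidAlgebra ℂ G) j)).det
      ≠ 0 := by
  classical
  have le_of_isConj_pow : ∀ i j t, IsConj (g i) (g j ^ t) → i ≤ j := fun i j t h => by
    have hdvd := orderOf_dvd_of_isConj_pow h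
    rw [horder, horder] at hdvd
    exact hmono.le_iff_le.mp (Nat.le_of_dvd (by linarith [hd j]) hdvd)
  have ne_one : ∀ i, g i ≠ 1 := fun i hi => by
    have := horder i
    rw [hi, orderOf_one] at this
    linarith [hd i]
  rw [Matrix.det_of_isUpperTriangular]
  · refine prod_ne_zero_iff.mpr fun i _ => ?_
    cases i using Fin.cases with
    | zero => simp
    | succ i =>
      simp only [Matrix.of_apply, Fin.cons_succ]
      exact tauC_pIdem_ne_zero (hd i) (IsConj.refl (g i))
  · intro i j hji
    cases i using Fin.cases with
    | zero => exact absurd hji (Fin.not_lt_zero j)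
    | succ i =>
      cases j using Fin.cases with
      | zero =>
        simp only [Matrix.of_apply, Fin.cons_succ, Fin.cons_zero]
        exact tauC_one_eq_zero fun h => ne_one i (isConj_one_left.mp h)
      | succ j =>
        simp only [Matrix.of_apply, Fin.cons_succ]
        exact tauC_pIdem_eq_zero fun t h =>
          (le_of_isConj_pow i j t h).not_gt (Fin.succ_lt_succ_iff.mp hji)
end

section
/- Let G be a group with a length function l such that the conjugacy class of every element g ≠ 1 has superpolynomial growth with respect to l. Let τ : ℂ[G] → ℂ be a trace which is bounded with respect to the H^s norm for some s ≥ 0. Then τ is a scalar multiple of the canonical trace: τ(f) = τ(1) · f(1) for all f ∈ ℂ[G], where f(1) denotes the coefficient of the identity element. -/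
/-- A length function on a group `G`: `l(1) = 0`, `l(g⁻¹) = l(g)`,
`l(gh) ≤ l(g) + l(h)`, and every sphere `{g | l(g) = n}` is finite. -/
structure IsLengthFunction {G : Type*} [Group G] (l : G → ℕ) : Prop where
  map_one : l 1 = 0
  map_inv : ∀ g : G, l g⁻¹ = l g
  map_mul : ∀ g h : G, l (g * h) ≤ l g + l h
  finite_spheres : ∀ n : ℕ, {g : G | l g = n}.Finite

/-- A subset `C ⊆ G` has superpolynomial growth with respect to `l` if for all
constants `K`, `m` there are infinitely many `n` with `|{g ∈ C | l g = n}| > K(1+n)^m`. -/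
def SuperPolyGrowth {G : Type*} [Group G] (l : G → ℕ) (C : Set G) : Prop :=
  ∀ K m : ℕ, {n : ℕ | K * (1 + n) ^ m < ({g ∈ C | l g = n} : Set G).ncard}.Infinite

/-- The Sobolev `H^s` norm `‖f‖_{H^s} = (∑_g |f(g)|² (1 + l(g))^{2s})^{1/2}` on `ℂ[G]`. -/
noncomputable def hsNorm {G : Type*} [Group G] (l : G → ℕ) (s : ℝ)
    (f : MonoidAlgebra ℂ G) : ℝ :=
  Real.sqrt (∑ g ∈ f.coeff.support, ‖f.coeff g‖ ^ 2 * (1 + (l g : ℝ)) ^ (2 * s))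

/-! A trace is constant on conjugacy classes, so by linearity it suffices to show
`τ (single g 1) = 0` for `g ≠ 1`. Testing the `H^s` bound on the indicator function of the
`N_n` elements of length `n` in the conjugacy class of `g` gives
`N_n ‖τ (single g 1)‖ ≤ K √N_n (1 + n)^s`, i.e. `N_n ‖τ (single g 1)‖² ≤ K² (1 + n)^(2s)`,
which superpolynomial growth of `N_n` contradicts unless `τ (single g 1) = 0`. -/

open MonoidAlgebra Finset

section Trace

variable {k G M : Type*} [Group G]

theorem map_single_eq_of_isConj [Semiring k] (τ : MonoidAlgebra k G → M)
    (hτ : ∀ a b, τ (a * b) = τ (b * a)) {g x : G} (h : IsConj g x) (r : k) :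
    τ (single x r) = τ (single g r) := by
  obtain ⟨c, rfl⟩ := isConj_iff.mp h
  have h := hτ (single c 1) (single g r * single c⁻¹ 1)
  rw [single_mul_single, single_mul_single, single_mul_single] at h
  simpa [mul_assoc] using h

theorem eq_map_one_mul_coeff_one_of_map_single_eq_zero [CommSemiring k]
    (τ : MonoidAlgebra k G →ₗ[k] k) (hτ : ∀ g ≠ 1, τ (single g 1) = 0) (f : MonoidAlgebra k G) :
    τ f = τ 1 * f.coeff 1 := by
  induction f using MonoidAlgebra.induction_linear with
  | zero => simp
  | add f f' hf hf' => simp [hf, hf', mul_add]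
  | single g r =>
    rw [← mul_one r, ← smul_eq_mul, ← smul_single, map_smul]
    obtain rfl | hg := eq_or_ne g 1
    · simp [one_def, mul_comm]
    · simp [hτ g hg, Finsupp.single_eq_of_ne' hg]

end Trace

theorem SuperPolyGrowth.exists_lt_ncard {G : Type*} [Group G] {l : G → ℕ} {C : Set G}
    (hC : SuperPolyGrowth l C) (A r : ℝ) :
    ∃ n : ℕ, A * (1 + n) ^ r < ({g ∈ C | l g = n} : Set G).ncard := by
  obtain ⟨n, hn⟩ := (hC ⌈A⌉₊ ⌈r⌉₊).nonempty
  have hn' : ⌈A⌉₊ * (1 + n : ℝ) ^ ⌈r⌉₊ < ({g ∈ C | l g = n} : Set G).ncard := by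
    exact_mod_cast hn
  refine ⟨n, lt_of_le_of_lt ?_ hn'⟩
  rw [← Real.rpow_natCast]
  gcongr
  · exact Nat.le_ceil A
  · simp
  · exact Nat.le_ceil r

section Sobolev

variable {G : Type*} [Group G] (l : G → ℕ) (s : ℝ)

theorem hsNorm_sum_single_one {S : Finset G} {n : ℕ} (hS : ∀ x ∈ S, l x = n) :
    hsNorm l s (∑ x ∈ S, single x (1 : ℂ)) = √(#S * (1 + n) ^ (2 * s)) := by
  classical
  have hcoeff : ∀ x, (∑ y ∈ S, single y (1 : ℂ)).coeff x = if x ∈ S then 1 else 0 := by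
    intro x
    simp [Finset.sum_apply', Finsupp.single_apply]
  have hsupp : (∑ y ∈ S, single y (1 : ℂ)).coeff.support = S := by
    ext x
    rw [Finsupp.mem_support_iff, hcoeff]
    split_ifs with hx <;> simp [hx]
  rw [hsNorm, hsupp, Finset.sum_congr rfl fun x hx => by rw [hcoeff, if_pos hx, hS x hx]]
  simp

theorem card_mul_norm_sq_le_of_map_single_eq (τ : MonoidAlgebra ℂ G →ₗ[ℂ] ℂ) (K : ℝ)
    (hbound : ∀ f, ‖τ f‖ ≤ K * hsNorm l s f) {S : Finset G} {n : ℕ} {z : ℂ}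
    (hS : ∀ x ∈ S, l x = n) (hτS : ∀ x ∈ S, τ (single x 1) = z) :
    #S * ‖z‖ ^ 2 ≤ K ^ 2 * (1 + n) ^ (2 * s) := by
  obtain rfl | hne := S.eq_empty_or_nonempty
  · simp only [card_empty, CharP.cast_eq_zero, zero_mul]
    positivity
  have hτf : ‖τ (∑ x ∈ S, single x 1)‖ = #S * ‖z‖ := by
    simp [map_sum, Finset.sum_congr rfl hτS]
  have h := hbound (∑ x ∈ S, single x 1)
  rw [hτf, hsNorm_sum_single_one l s hS] at h
  have hsq := pow_le_pow_left₀ (by positivity) h 2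
  rw [mul_pow, mul_pow, Real.sq_sqrt (by positivity)] at hsq
  have hcard : (0 : ℝ) < #S := by exact_mod_cast hne.card_pos
  refine le_of_mul_le_mul_left ?_ hcard
  linarith

end Sobolev

theorem map_single_eq_zero_of_superPolyGrowth {G : Type*} [Group G] (l : G → ℕ)
    (τ : MonoidAlgebra ℂ G →ₗ[ℂ] ℂ) (hτ : ∀ a b, τ (a * b) = τ (b * a)) (s K : ℝ)
    (hbound : ∀ f, ‖τ f‖ ≤ K * hsNorm l s f) {g : G}
    (hg : SuperPolyGrowth l {x | IsConj g x}) :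
    τ (single g 1) = 0 := by
  by_contra hne
  have hpos : 0 < ‖τ (single g 1)‖ ^ 2 := by positivity
  obtain ⟨n, hn⟩ := hg.exists_lt_ncard (K ^ 2 / ‖τ (single g 1)‖ ^ 2) (2 * s)
  -- `ncard` of an infinite set is `0`
  have hfin : ({x ∈ {x | IsConj g x} | l x = n} : Set G).Finite :=
    Set.finite_of_ncard_pos (Nat.cast_pos.mp (hn.trans_le' (by positivity)))
  have hbd := card_mul_norm_sq_le_of_map_single_eq l s τ K hbound (S := hfin.toFinset)
    (fun x hx => ((hfin.mem_toFinset).mp hx).2)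
    (fun x hx => map_single_eq_of_isConj τ hτ ((hfin.mem_toFinset).mp hx).1 1)
  rw [Set.ncard_eq_toFinset_card _ hfin, div_mul_eq_mul_div, div_lt_iff₀ hpos] at hn
  exact hn.not_ge hbd

theorem trace_eq_canonical_of_superPolyGrowth_general {G : Type*} [Group G] (l : G → ℕ)
    (hsuper : ∀ g : G, g ≠ 1 → SuperPolyGrowth l {x : G | IsConj g x})
    (τ : MonoidAlgebra ℂ G →ₗ[ℂ] ℂ)
    (htrace : ∀ a b : MonoidAlgebra ℂ G, τ (a * b) = τ (b * a))
    (s : ℝ) (K : ℝ)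
    (hbound : ∀ f : MonoidAlgebra ℂ G, ‖τ f‖ ≤ K * hsNorm l s f) :
    ∀ f : MonoidAlgebra ℂ G, τ f = τ 1 * f.coeff 1 :=
  eq_map_one_mul_coeff_one_of_map_single_eq_zero τ fun g hg =>
    map_single_eq_zero_of_superPolyGrowth l τ htrace s K hbound (hsuper g hg)

/-- If the conjugacy class of every nontrivial element of `G` has superpolynomial
growth with respect to a length function `l`, then every trace `τ` on `ℂ[G]` bounded
with respect to some `H^s` norm is a scalar multiple of the canonical trace:
`τ(f) = τ(1) · f(1)` for all `f ∈ ℂ[G]`. -/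
theorem trace_eq_canonical_of_superPolyGrowth {G : Type*} [Group G] (l : G → ℕ)
    (hl : IsLengthFunction l)
    (hsuper : ∀ g : G, g ≠ 1 → SuperPolyGrowth l {x : G | IsConj g x})
    (τ : MonoidAlgebra ℂ G →ₗ[ℂ] ℂ)
    (htrace : ∀ a b : MonoidAlgebra ℂ G, τ (a * b) = τ (b * a))
    (s : ℝ) (hs : 0 ≤ s) (K : ℝ)
    (hbound : ∀ f : MonoidAlgebra ℂ G, ‖τ f‖ ≤ K * hsNorm l s f) :
    ∀ f : MonoidAlgebra ℂ G, τ f = τ 1 * f.coeff 1 :=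
  trace_eq_canonical_of_superPolyGrowth_general l hsuper τ htrace s K hbound
end
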